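/- Let G be a finite group with exactly two irredundant covers. Then G is solvable and contains a cyclic maximal subgroup (a subgroup that is cyclic and maximal among proper subgroups). -/

import Mathlib

set_option linter.unusedSectionVars false

/-- A cover of a group: a finite collection of proper subgroups whose union is the group. -/
def IsCover {G : Type*} [Group G] (S : Finset (Subgroup G)) : Prop :=
  (∀ H ∈ S, H ≠ ⊤) ∧ ∀ g : G, ∃ H ∈ S, g ∈ H

/-- An irredundant cover: a cover with no proper subcollection that is also a cover. -/
def IsIrredundantCover {G : Type*} [Group G] (S : Finset (Subgroup G)) : Prop :=
  IsCover S ∧ ∀ T : Finset (Subgroup G), T ⊂ S → ¬ IsCover T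

/-- β(G): the number of irredundant covers of G. -/
noncomputable def beta (G : Type*) [Group G] : ℕ :=
  Nat.card {S : Finset (Subgroup G) // IsIrredundantCover S}

/-- A maximal cyclic subgroup: cyclic, and not contained in any strictly larger cyclic subgroup. -/
def IsMaximalCyclic {G : Type*} [Group G] (C : Subgroup G) : Prop :=
  IsCyclic ↥C ∧ ∀ D : Subgroup G, IsCyclic ↥D → C ≤ D → D = C

/-- A cyclically embedded subgroup: ⟨N, x⟩ is cyclic for all x. -/
def CyclicallyEmbedded {G : Type*} [Group G] (N : Subgroup G) : Prop :=
  ∀ x : G, IsCyclic ↥(N ⊔ Subgroup.zpowers x)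

namespace Beta2

open Subgroup

variable {G : Type*} [Group G]

lemma isCyclic_zpowers (x : G) : IsCyclic ↥(zpowers x) := by
  refine ⟨⟨⟨x, mem_zpowers x⟩, fun y => ?_⟩⟩
  obtain ⟨k, hk⟩ := Subgroup.mem_zpowers_iff.mp y.2
  exact Subgroup.mem_zpowers_iff.mpr ⟨k, Subtype.ext (by simpa using hk)⟩

lemma exists_zpowers_eq {E : Subgroup G} (h : IsCyclic ↥E) : ∃ x : G, zpowers x = E := by
  obtain ⟨g, hg⟩ := h.exists_generator
  refine ⟨(g : G), le_antisymm (zpowers_le.mpr g.2) ?_⟩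
  intro y hy
  obtain ⟨k, hk⟩ := Subgroup.mem_zpowers_iff.mp (hg ⟨y, hy⟩)
  exact Subgroup.mem_zpowers_iff.mpr ⟨k, by
    have := congrArg (Subtype.val) hk
    simpa using this⟩

lemma comm_of_isCyclic {Q : Type*} [Group Q] (h : IsCyclic Q) (a b : Q) : a * b = b * a := by
  obtain ⟨g, hg⟩ := h
  obtain ⟨m, hm⟩ := Subgroup.mem_zpowers_iff.mp (hg a)
  obtain ⟨k, hk⟩ := Subgroup.mem_zpowers_iff.mp (hg b)
  rw [← hm, ← hk, ← zpow_add, ← zpow_add, add_comm]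

lemma comm_of_cyclic_subgroup {E : Subgroup G} (h : IsCyclic ↥E) {a b : G}
    (ha : a ∈ E) (hb : b ∈ E) : a * b = b * a := by
  have := comm_of_isCyclic h ⟨a, ha⟩ ⟨b, hb⟩
  exact congrArg Subtype.val this

lemma solvable_of_cyclic {Q : Type*} [Group Q] (h : IsCyclic Q) : IsSolvable Q :=
  isSolvable_of_comm (comm_of_isCyclic h)

lemma solv_of_normal (N : Subgroup G) (hN : N.Normal) (h1 : IsSolvable ↥N)
    (h2 : IsSolvable (G ⧸ N)) : IsSolvable G := by
  haveI := hN; haveI := h1; haveI := h2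
  exact solvable_of_ker_le_range N.subtype (QuotientGroup.mk' N)
    (by rw [QuotientGroup.ker_mk', Subgroup.range_subtype]) (hG' := h1) (hG'' := h2)

lemma isCyclic_of_subgroups_eq {Q : Type*} [Group Q]
    (h : ∀ K : Subgroup Q, K = ⊥ ∨ K = ⊤) : IsCyclic Q := by
  rcases subsingleton_or_nontrivial Q with hs | hs
  · exact isCyclic_of_subsingleton
  · obtain ⟨x, hx⟩ := exists_ne (1 : Q)
    rcases h (zpowers x) with hb | ht
    · exact absurd (Subgroup.mem_bot.mp (hb ▸ mem_zpowers x)) hx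
    · refine ⟨x, fun y => ?_⟩
      have : y ∈ (⊤ : Subgroup Q) := Subgroup.mem_top y
      rwa [← ht] at this

/-! ### conjugation -/

def cj (g : G) (D : Subgroup G) : Subgroup G := D.map (MulAut.conj g).toMonoidHom

lemma mem_cj {g x : G} {D : Subgroup G} : x ∈ cj g D ↔ g⁻¹ * x * g ∈ D := by
  rw [cj, Subgroup.mem_map_equiv, MulAut.conj_symm_apply]

lemma cj_cj (g h : G) (D : Subgroup G) : cj g (cj h D) = cj (g * h) D := by
  ext x
  simp only [mem_cj]
  have : h⁻¹ * (g⁻¹ * x * g) * h = (g * h)⁻¹ * x * (g * h) := by group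
  rw [this]

lemma cj_one (D : Subgroup G) : cj 1 D = D := by
  ext x; simp [mem_cj]

lemma cj_le_cj {g : G} {D E : Subgroup G} (h : D ≤ E) : cj g D ≤ cj g E :=
  Subgroup.map_mono h

lemma cj_le_iff {g : G} {D E : Subgroup G} : cj g D ≤ cj g E ↔ D ≤ E := by
  constructor
  · intro h
    have := cj_le_cj (g := g⁻¹) h
    rwa [cj_cj, cj_cj, inv_mul_cancel, cj_one, cj_one] at this
  · exact cj_le_cj

lemma cj_inj {g : G} {D E : Subgroup G} (h : cj g D = cj g E) : D = E :=
  le_antisymm (cj_le_iff.mp h.le) (cj_le_iff.mp h.ge)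

lemma cj_top (g : G) : cj g ⊤ = ⊤ := by ext x; simp [mem_cj]

lemma cj_eq_top {g : G} {D : Subgroup G} : cj g D = ⊤ ↔ D = ⊤ :=
  ⟨fun h => cj_inj (by rw [h, cj_top]), fun h => by rw [h, cj_top]⟩

lemma cj_zpowers (g x : G) : cj g (zpowers x) = zpowers (g * x * g⁻¹) := by
  rw [cj, MonoidHom.map_zpowers]; rfl

lemma cj_lt_iff {g : G} {D E : Subgroup G} : cj g D < cj g E ↔ D < E := by
  simp only [lt_iff_le_not_ge, cj_le_iff]

lemma isCyclic_cj {g : G} {E : Subgroup G} (h : IsCyclic ↥E) : IsCyclic ↥(cj g E) := by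
  obtain ⟨x, rfl⟩ := exists_zpowers_eq h
  rw [cj_zpowers]
  exact isCyclic_zpowers _

lemma isMaximalCyclic_cj {g : G} {E : Subgroup G} (h : IsMaximalCyclic E) :
    IsMaximalCyclic (cj g E) := by
  refine ⟨isCyclic_cj h.1, fun D hD hle => ?_⟩
  have h2 : E ≤ cj g⁻¹ D := by
    have := cj_le_cj (g := g⁻¹) hle
    rwa [cj_cj, inv_mul_cancel, cj_one] at this
  have h3 := h.2 _ (isCyclic_cj (g := g⁻¹) hD) h2
  have := congrArg (cj g) h3
  rwa [cj_cj, mul_inv_cancel, cj_one] at this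

lemma isCoatom_cj {g : G} {E : Subgroup G} (h : IsCoatom E) : IsCoatom (cj g E) := by
  refine ⟨fun ht => h.1 (cj_eq_top.mp ht), fun K hK => ?_⟩
  have h2 : E < cj g⁻¹ K := by
    have := (cj_lt_iff (g := g⁻¹)).mpr hK
    rwa [cj_cj, inv_mul_cancel, cj_one] at this
  have h3 := h.2 _ h2
  have h4 : cj g (cj g⁻¹ K) = K := by rw [cj_cj, mul_inv_cancel, cj_one]
  rw [← h4, h3, cj_top]

lemma cj_mem_iff {g : G} {D : Subgroup G} {d : G} : g * d * g⁻¹ ∈ cj g D ↔ d ∈ D := by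
  rw [mem_cj]
  have : g⁻¹ * (g * d * g⁻¹) * g = d := by group
  rw [this]

/-! ### finiteness and covers -/

section Fin

variable [Finite G]

local instance : Finite (Subgroup G) :=
  Finite.of_injective (fun H => (H : Set G)) SetLike.coe_injective

lemma exists_maximalCyclic (x : G) : ∃ E, IsMaximalCyclic E ∧ x ∈ E := by
  have hfin : Set.Finite {F : Subgroup G | IsCyclic ↥F ∧ x ∈ F} := Set.toFinite _
  have hne : Set.Nonempty {F : Subgroup G | IsCyclic ↥F ∧ x ∈ F} :=
    ⟨zpowers x, isCyclic_zpowers x, mem_zpowers x⟩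
  obtain ⟨E, hE, hmax⟩ := hfin.exists_maximalFor id _ hne
  exact ⟨E, ⟨hE.1, fun D hD hle => le_antisymm (hmax ⟨hD, hle hE.2⟩ hle) hle⟩, hE.2⟩

lemma maxcyclic_ne_top (hnc : ¬IsCyclic G) {E : Subgroup G} (hE : IsMaximalCyclic E) :
    E ≠ ⊤ := by
  intro h
  haveI : IsCyclic ↥(⊤ : Subgroup G) := h ▸ hE.1
  exact hnc (isCyclic_of_surjective (Subgroup.topEquiv (G := G)) Subgroup.topEquiv.surjective)

lemma exists_irred_subcover (S : Finset (Subgroup G)) (hS : IsCover S) :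
    ∃ T ⊆ S, IsIrredundantCover T := by
  classical
  induction S using Finset.strongInduction with
  | _ S IH =>
    by_cases h : ∃ T ⊂ S, IsCover T
    · obtain ⟨T, hT, hTc⟩ := h
      obtain ⟨U, hU, hUi⟩ := IH T hT hTc
      exact ⟨U, hU.trans hT.subset, hUi⟩
    · exact ⟨S, Finset.Subset.refl S, hS, fun T hT hTc => h ⟨T, hT, hTc⟩⟩

lemma exists_M (hnc : ¬IsCyclic G) :
    ∃ MM : Finset (Subgroup G), IsIrredundantCover MM ∧ ∀ Y, Y ∈ MM ↔ IsMaximalCyclic Y := by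
  classical
  refine ⟨(Set.toFinite {E : Subgroup G | IsMaximalCyclic E}).toFinset, ⟨⟨?_, ?_⟩, ?_⟩, ?_⟩
  · intro Y hY
    rw [Set.Finite.mem_toFinset] at hY
    exact maxcyclic_ne_top hnc hY
  · intro g
    obtain ⟨E, hE, hgE⟩ := exists_maximalCyclic g
    exact ⟨E, (Set.Finite.mem_toFinset _).mpr hE, hgE⟩
  · intro T hT hTc
    obtain ⟨E, hEM, hET⟩ := Finset.exists_of_ssubset hT
    rw [Set.Finite.mem_toFinset] at hEM
    obtain ⟨x, hx⟩ := exists_zpowers_eq hEM.1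
    obtain ⟨Y, hYT, hxY⟩ := hTc.2 x
    have hYM : IsMaximalCyclic Y := by
      have := hT.subset hYT
      rwa [Set.Finite.mem_toFinset] at this
    have hEY : E ≤ Y := hx ▸ zpowers_le.mpr hxY
    have : Y = E := hEM.2 Y hYM.1 hEY
    exact hET (this ▸ hYT)
  · intro Y
    rw [Set.Finite.mem_toFinset]
    exact Iff.rfl

lemma exists_special_cover (hnc : ¬IsCyclic G) {D K : Subgroup G}
    (hD : IsMaximalCyclic D) (hDK : D < K) (hK : K ≠ ⊤) :
    ∃ T, IsIrredundantCover T ∧ K ∈ T ∧ ∀ Y ∈ T, Y = K ∨ (IsMaximalCyclic Y ∧ Y ≠ D) := by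
  classical
  obtain ⟨MM, hMM, hmemM⟩ := exists_M hnc
  have hS0 : IsCover (insert K (MM.erase D)) := by
    constructor
    · intro Y hY
      rcases Finset.mem_insert.mp hY with h | h
      · exact h ▸ hK
      · exact maxcyclic_ne_top hnc ((hmemM Y).mp (Finset.mem_of_mem_erase h))
    · intro g
      obtain ⟨E, hE, hgE⟩ := exists_maximalCyclic g
      by_cases hED : E = D
      · exact ⟨K, Finset.mem_insert_self _ _, hDK.le (hED ▸ hgE)⟩
      · exact ⟨E, Finset.mem_insert_of_mem (Finset.mem_erase.mpr ⟨hED, (hmemM E).mpr hE⟩), hgE⟩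
  obtain ⟨T, hTsub, hTi⟩ := exists_irred_subcover _ hS0
  have hmem : ∀ Y ∈ T, Y = K ∨ (IsMaximalCyclic Y ∧ Y ≠ D) := by
    intro Y hY
    rcases Finset.mem_insert.mp (hTsub hY) with h | h
    · exact Or.inl h
    · exact Or.inr ⟨(hmemM Y).mp (Finset.mem_of_mem_erase h), (Finset.mem_erase.mp h).1⟩
  have hKT : K ∈ T := by
    obtain ⟨x, hx⟩ := exists_zpowers_eq hD.1
    obtain ⟨Y, hYT, hxY⟩ := hTi.1.2 x
    rcases hmem Y hYT with h | h
    · exact h ▸ hYT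
    · exfalso
      have hDY : D ≤ Y := hx ▸ zpowers_le.mpr hxY
      exact h.2 (hD.2 Y h.1.1 hDY)
  exact ⟨T, hTi, hKT, hmem⟩

lemma eq_of_beta_two (hb : beta G = 2) {A B C : Finset (Subgroup G)}
    (hA : IsIrredundantCover A) (hB : IsIrredundantCover B) (hC : IsIrredundantCover C)
    (hBA : B ≠ A) (hCA : C ≠ A) : B = C := by
  by_contra hBC
  haveI := Fintype.ofFinite (Subgroup G)
  haveI : Finite {S : Finset (Subgroup G) // IsIrredundantCover S} := Subtype.finite
  haveI := Fintype.ofFinite {S : Finset (Subgroup G) // IsIrredundantCover S}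
  have h3 : 2 < Fintype.card {S : Finset (Subgroup G) // IsIrredundantCover S} :=
    Fintype.two_lt_card_iff.mpr ⟨⟨A, hA⟩, ⟨B, hB⟩, ⟨C, hC⟩,
      fun h => hBA (congrArg Subtype.val h).symm,
      fun h => hCA (congrArg Subtype.val h).symm,
      fun h => hBC (congrArg Subtype.val h)⟩
  rw [beta, Nat.card_eq_fintype_card] at hb
  omega

lemma beta_eq_zero_of_cyclic (h : IsCyclic G) : beta G = 0 := by
  have : IsEmpty {S : Finset (Subgroup G) // IsIrredundantCover S} := by
    constructor
    rintro ⟨S, hS⟩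
    obtain ⟨x, hx⟩ := h
    have hxt : zpowers x = ⊤ := (Subgroup.eq_top_iff' _).mpr hx
    obtain ⟨Y, hY, hxY⟩ := hS.1.2 x
    exact hS.1.1 Y hY (top_le_iff.mp (hxt ▸ zpowers_le.mpr hxY))
  rw [beta]
  exact Nat.card_of_isEmpty

lemma beta_eq_one_of_unique {M : Finset (Subgroup G)} (hM : IsIrredundantCover M)
    (huniq : ∀ S, IsIrredundantCover S → S = M) : beta G = 1 := by
  rw [beta, Nat.card_eq_one_iff_unique]
  exact ⟨⟨fun a b => Subtype.ext ((huniq _ a.2).trans (huniq _ b.2).symm)⟩, ⟨⟨M, hM⟩⟩⟩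

lemma two_le_beta (hnc : ¬IsCyclic G) {D K : Subgroup G}
    (hD : IsMaximalCyclic D) (hDK : D < K) (hK : K ≠ ⊤) : 2 ≤ beta G := by
  obtain ⟨MM, hMM, hmem⟩ := exists_M hnc
  obtain ⟨T, hT, hKT, _⟩ := exists_special_cover hnc hD hDK hK
  have hne : T ≠ MM := by
    intro h
    have hKM : IsMaximalCyclic K := (hmem K).mp (h ▸ hKT)
    exact (ne_of_gt hDK) (hD.2 K hKM.1 hDK.le)
  haveI : Finite {S : Finset (Subgroup G) // IsIrredundantCover S} := by
    haveI := Fintype.ofFinite (Subgroup G)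
    exact Subtype.finite
  rw [beta]
  have hnt : Nontrivial {S : Finset (Subgroup G) // IsIrredundantCover S} :=
    ⟨⟨T, hT⟩, ⟨MM, hMM⟩, fun h => hne (congrArg Subtype.val h)⟩
  exact Finite.one_lt_card_iff_nontrivial.mpr hnt

lemma beta_le_of_surjective {Q : Type*} [Group Q] [Finite Q]
    (π : G →* Q) (hπ : Function.Surjective π) : beta Q ≤ beta G := by
  classical
  have hci : Function.Injective (Subgroup.comap π : Subgroup Q → Subgroup G) :=
    Subgroup.comap_injective hπ
  haveI : Finite {S : Finset (Subgroup G) // IsIrredundantCover S} := by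
    haveI := Fintype.ofFinite (Subgroup G)
    exact Subtype.finite
  have key : ∀ S : Finset (Subgroup Q), IsIrredundantCover S →
      IsIrredundantCover (S.image (Subgroup.comap π)) := by
    intro S hS
    constructor
    · constructor
      · intro A hA
        obtain ⟨Kb, hKb, rfl⟩ := Finset.mem_image.mp hA
        intro htop
        refine hS.1.1 Kb hKb ((Subgroup.eq_top_iff' Kb).mpr fun q => ?_)
        obtain ⟨g, rfl⟩ := hπ q
        have : g ∈ Subgroup.comap π Kb := htop ▸ Subgroup.mem_top g
        exact this
      · intro g
        obtain ⟨Kb, hKb, hgKb⟩ := hS.1.2 (π g)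
        exact ⟨Subgroup.comap π Kb, Finset.mem_image_of_mem _ hKb, hgKb⟩
    · intro T hT hTc
      set Tb : Finset (Subgroup Q) := S.filter (fun Kb => Subgroup.comap π Kb ∈ T) with hTbdef
      have hsub : Tb ⊆ S := Finset.filter_subset _ _
      have himg : Tb.image (Subgroup.comap π) = T := by
        apply Finset.Subset.antisymm
        · intro A hA
          obtain ⟨Kb, hKb, rfl⟩ := Finset.mem_image.mp hA
          exact (Finset.mem_filter.mp hKb).2
        · intro A hA
          obtain ⟨Kb, hKb, rfl⟩ := Finset.mem_image.mp (hT.subset hA)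
          exact Finset.mem_image_of_mem _ (Finset.mem_filter.mpr ⟨hKb, hA⟩)
      have hTbne : Tb ≠ S := by
        intro h
        exact hT.ne (by rw [← himg, h])
      have hTbS : Tb ⊂ S := lt_of_le_of_ne hsub hTbne
      refine hS.2 Tb hTbS ⟨fun Kb hKb => hS.1.1 Kb (Finset.mem_filter.mp hKb).1, fun q => ?_⟩
      obtain ⟨g, rfl⟩ := hπ q
      obtain ⟨A, hAT, hgA⟩ := hTc.2 g
      rw [← himg] at hAT
      obtain ⟨Kb, hKb, rfl⟩ := Finset.mem_image.mp hAT
      exact ⟨Kb, hKb, hgA⟩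
  rw [beta, beta]
  refine Nat.card_le_card_of_injective
    (fun S : {S : Finset (Subgroup Q) // IsIrredundantCover S} =>
      (⟨S.1.image (Subgroup.comap π), key S.1 S.2⟩ :
        {S : Finset (Subgroup G) // IsIrredundantCover S})) ?_
  intro A B h
  exact Subtype.ext (Finset.image_injective hci (congrArg Subtype.val h))

end Fin

/-! ### normalizer and quotient helpers -/

lemma cj_eq_iff_mem_normalizer {g : G} {D : Subgroup G} :
    cj g D = D ↔ g ∈ Subgroup.normalizer (D : Set G) := by
  constructor
  · intro h
    rw [Subgroup.mem_normalizer_iff]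
    intro x
    constructor
    · intro hx
      have : g * x * g⁻¹ ∈ cj g D := cj_mem_iff.mpr hx
      rwa [h] at this
    · intro hx
      have : g * x * g⁻¹ ∈ cj g D := h.symm ▸ hx
      exact cj_mem_iff.mp this
  · intro h
    ext x
    rw [mem_cj]
    have := Subgroup.mem_normalizer_iff.mp h (g⁻¹ * x * g)
    have hg : g * (g⁻¹ * x * g) * g⁻¹ = x := by group
    rw [hg] at this
    exact this


lemma normal_iff_cj {N : Subgroup G} : N.Normal ↔ ∀ g : G, cj g N = N := by
  constructor
  · intro h g
    ext x
    rw [mem_cj]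
    constructor
    · intro hx
      have := h.conj_mem _ hx g
      have hgx : g * (g⁻¹ * x * g) * g⁻¹ = x := by group
      rwa [hgx] at this
    · intro hx
      have := h.conj_mem _ hx g⁻¹
      simpa [mul_assoc] using this
  · intro h
    constructor
    intro n hn g
    have : g * n * g⁻¹ ∈ cj g N := cj_mem_iff.mpr hn
    rwa [h g] at this

lemma mem_normalizer_of_comm {w : G} {D : Subgroup G} (h : ∀ x ∈ D, w * x = x * w) :
    w ∈ Subgroup.normalizer (D : Set G) := by
  rw [Subgroup.mem_normalizer_iff]
  intro x
  constructor
  · intro hx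
    have h1 : w * x * w⁻¹ = x := by rw [h x hx]; group
    rw [h1]; exact hx
  · intro hx
    have h2 := h _ hx
    have h3 : w * x * w⁻¹ = x := by
      have hcalc : w * (w * x * w⁻¹) = w * x := by
        rw [h2]; group
      exact mul_left_cancel hcalc
    rwa [h3] at hx

lemma card_cj (g : G) (E : Subgroup G) : Nat.card ↥(cj g E) = Nat.card ↥E :=
  (Nat.card_congr (Subgroup.equivMapOfInjective E _ (MulEquiv.injective (MulAut.conj g))).toEquiv).symm

lemma quotient_cyclic_of_coatom {Q : Type*} [Group Q] (N : Subgroup Q) (hnorm : N.Normal)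
    (hN : IsCoatom N) : IsCyclic (Q ⧸ N) := by
  haveI := hnorm
  apply isCyclic_of_subgroups_eq
  intro K'
  set π := QuotientGroup.mk' N with hπ
  have hker : N ≤ Subgroup.comap π K' := by
    intro h hh
    have h1 : π h = 1 := (QuotientGroup.eq_one_iff h).mpr hh
    rw [Subgroup.mem_comap, h1]
    exact K'.one_mem
  have hmc : Subgroup.map π (Subgroup.comap π K') = K' :=
    Subgroup.map_comap_eq_self_of_surjective (QuotientGroup.mk'_surjective N) K'
  rcases eq_or_lt_of_le hker with h | h
  · left
    rw [← hmc, ← h]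
    ext q
    simp only [Subgroup.mem_map, Subgroup.mem_bot]
    constructor
    · rintro ⟨a, ha, rfl⟩
      exact (QuotientGroup.eq_one_iff a).mpr ha
    · intro hq
      exact ⟨1, N.one_mem, by rw [hq, map_one]⟩
  · right
    rw [← hmc, hN.2 _ h]
    exact Subgroup.map_top_of_surjective π (QuotientGroup.mk'_surjective N)

lemma solvable_of_cyclic_chain {Q : Type*} [Group Q] (N : Subgroup Q) (hn : N.Normal)
    (h1 : IsCyclic ↥N) (h2 : IsCyclic (Q ⧸ N)) : IsSolvable Q :=
  solv_of_normal N hn (solvable_of_cyclic h1) (solvable_of_cyclic h2)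

/-! ### main induction -/

universe u

lemma main : ∀ (n : ℕ) (G : Type u) [Group G] [Finite G], Nat.card G = n → beta G = 2 →
    IsSolvable G ∧ ∃ C : Subgroup G, IsCyclic ↥C ∧ IsCoatom C := by
  intro n
  induction n using Nat.strong_induction_on with
  | _ n IH =>
  intro G _ _ hcard hb
  classical
  haveI : Finite (Subgroup G) :=
    Finite.of_injective (fun H => (H : Set G)) SetLike.coe_injective
  have hnc : ¬IsCyclic G := by
    intro h
    have h0 : beta G = 0 := beta_eq_zero_of_cyclic h
    omega
  obtain ⟨MM, hMM, hmemM⟩ := exists_M hnc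
  -- existence of a non-coatom maximal cyclic subgroup
  have hexD : ∃ D : Subgroup G, IsMaximalCyclic D ∧ ¬IsCoatom D := by
    by_contra hall
    push_neg at hall
    have huniq : ∀ S, IsIrredundantCover S → S = MM := by
      intro S hS
      have hsub : MM ⊆ S := by
        intro E hEM
        have hE := (hmemM E).mp hEM
        have hco := hall E hE
        obtain ⟨x, hx⟩ := exists_zpowers_eq hE.1
        obtain ⟨Y, hYS, hxY⟩ := hS.1.2 x
        have hEY : E ≤ Y := hx ▸ zpowers_le.mpr hxY
        have : Y = E := by
          rcases eq_or_lt_of_le hEY with h | h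
          · exact h.symm
          · exact absurd (hco.2 Y h) (hS.1.1 Y hYS)
        exact this ▸ hYS
      by_contra hne
      exact hS.2 MM (lt_of_le_of_ne hsub (fun h => hne h.symm)) hMM.1
    have := beta_eq_one_of_unique hMM huniq
    omega
  obtain ⟨D0, hD0, hD0nc⟩ := hexD
  have hproperK : ∀ D : Subgroup G, IsMaximalCyclic D → ¬IsCoatom D →
      ∃ K, D < K ∧ K ≠ ⊤ := by
    intro D hD hDnc
    have hDt : D ≠ ⊤ := maxcyclic_ne_top hnc hD
    rw [IsCoatom, not_and] at hDnc
    have h2 := hDnc hDt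
    push_neg at h2
    exact h2
  obtain ⟨H, hD0H, hHtop⟩ := hproperK D0 hD0 hD0nc
  -- uniqueness of the overgroup
  have keyH : ∀ D, IsMaximalCyclic D → ¬IsCoatom D → ∀ K, D < K → K ≠ ⊤ → K = H := by
    intro D hD hDnc K hK1 hK2
    obtain ⟨T1, hT1, hKT1, hT1mem⟩ := exists_special_cover hnc hD hK1 hK2
    obtain ⟨T2, hT2, hHT2, hT2mem⟩ := exists_special_cover hnc hD0 hD0H hHtop
    have hKnotc : ¬IsCyclic ↥K := fun hc => (ne_of_gt hK1) (hD.2 K hc hK1.le)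
    have h1ne : T1 ≠ MM := fun h => hKnotc ((hmemM K).mp (h ▸ hKT1)).1
    have hHnotc : ¬IsCyclic ↥H := fun hc => (ne_of_gt hD0H) (hD0.2 H hc hD0H.le)
    have h2ne : T2 ≠ MM := fun h => hHnotc ((hmemM H).mp (h ▸ hHT2)).1
    have h12 : T1 = T2 := eq_of_beta_two hb hMM hT1 hT2 h1ne h2ne
    rcases hT2mem K (h12 ▸ hKT1) with h | h
    · exact h
    · exact absurd h.1.1 hKnotc
  have hHnc : ¬IsCyclic ↥H := fun hc => (ne_of_gt hD0H) (hD0.2 H hc hD0H.le)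
  have hHmax : ∀ D, IsMaximalCyclic D → ¬IsCoatom D → D < H := by
    intro D hD hDnc
    obtain ⟨K, hK1, hK2⟩ := hproperK D hD hDnc
    exact (keyH D hD hDnc K hK1 hK2) ▸ hK1
  have hinterval : ∀ D, IsMaximalCyclic D → ¬IsCoatom D →
      ∀ K, D ≤ K → K = D ∨ K = H ∨ K = ⊤ := by
    intro D hD hDnc K hle
    rcases eq_or_lt_of_le hle with h | h
    · exact Or.inl h.symm
    · by_cases ht : K = ⊤
      · exact Or.inr (Or.inr ht)
      · exact Or.inr (Or.inl (keyH D hD hDnc K h ht))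
  have hHcoatom : IsCoatom H := by
    refine ⟨hHtop, fun K hK => ?_⟩
    rcases hinterval D0 hD0 hD0nc K (hD0H.le.trans hK.le) with h | h | h
    · exfalso; rw [h] at hK; exact lt_asymm hK hD0H
    · exfalso; rw [h] at hK; exact lt_irrefl _ hK
    · exact h
  -- second conjunct
  have hexC : ∃ C : Subgroup G, IsMaximalCyclic C ∧ IsCoatom C := by
    by_contra hnone
    push_neg at hnone
    have hall : ∀ g : G, g ∈ H := by
      intro g
      obtain ⟨E, hE, hgE⟩ := exists_maximalCyclic g
      exact (hHmax E hE (hnone E hE)).le hgE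
    exact hHtop ((Subgroup.eq_top_iff' H).mpr hall)
  obtain ⟨C0, hC0m, hC0c⟩ := hexC
  have hCpart : ∃ C : Subgroup G, IsCyclic ↥C ∧ IsCoatom C := ⟨C0, hC0m.1, hC0c⟩
  -- conjugation stability
  have hstab : ∀ (g : G) D, IsMaximalCyclic D → ¬IsCoatom D →
      IsMaximalCyclic (cj g D) ∧ ¬IsCoatom (cj g D) := by
    intro g D h1 h2
    refine ⟨isMaximalCyclic_cj h1, fun hco => h2 ?_⟩
    have := isCoatom_cj (g := g⁻¹) hco
    rwa [cj_cj, inv_mul_cancel, cj_one] at this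
  -- H is normal
  have hHnormal : ∀ g : G, cj g H = H := by
    intro g
    obtain ⟨hmc, hnc2⟩ := hstab g D0 hD0 hD0nc
    exact keyH _ hmc hnc2 (cj g H) (cj_lt_iff.mpr hD0H) (fun h => hHtop (cj_eq_top.mp h))
  have hHNormal : H.Normal := normal_iff_cj.mpr hHnormal
  have hGHcyc : IsCyclic (G ⧸ H) := quotient_cyclic_of_coatom H hHNormal hHcoatom
  -- case split
  by_cases hcase : ∃ D, IsMaximalCyclic D ∧ ¬IsCoatom D ∧ ∀ h ∈ H, cj h D = D
  · -- CASE I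
    obtain ⟨D, hD, hDnc, hDnorm⟩ := hcase
    have hDH : D < H := hHmax D hD hDnc
    have hnormal : (D.subgroupOf H).Normal := by
      constructor
      intro m hm g
      rw [Subgroup.mem_subgroupOf] at hm ⊢
      have h1 : (↑g * ↑m * (↑g)⁻¹ : G) ∈ cj (↑g) D := cj_mem_iff.mpr hm
      rw [hDnorm ↑g g.2] at h1
      exact h1
    have hqc : IsCyclic (↥H ⧸ D.subgroupOf H) := by
      apply quotient_cyclic_of_coatom _ hnormal
      constructor
      · intro htop
        have hHD : H ≤ D := by
          intro x hx
          have : (⟨x, hx⟩ : ↥H) ∈ D.subgroupOf H := htop ▸ Subgroup.mem_top _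
          rwa [Subgroup.mem_subgroupOf] at this
        exact (ne_of_lt hDH) (le_antisymm hDH.le hHD)
      · intro K0 hK0
        set K := Subgroup.map H.subtype K0 with hKdefK
        have hDK : D ≤ K := by
          intro x hx
          refine ⟨⟨x, hDH.le hx⟩, ?_, rfl⟩
          exact hK0.le (Subgroup.mem_subgroupOf.mpr hx)
        have hKH : K ≤ H := by
          rintro x ⟨y, hy, rfl⟩
          exact y.2
        rcases hinterval D hD hDnc K hDK with h | h | h
        · exfalso
          have hle : K0 ≤ D.subgroupOf H := by
            intro y hy
            rw [Subgroup.mem_subgroupOf, ← h]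
            exact ⟨y, hy, rfl⟩
          exact (not_le_of_gt hK0) hle
        · rw [eq_top_iff]
          intro y _
          have hy : (↑y : G) ∈ K := by rw [h]; exact y.2
          obtain ⟨z, hz, hzy⟩ := hy
          have : z = y := Subtype.ext hzy
          exact this ▸ hz
        · exfalso
          exact hHtop (top_le_iff.mp (h ▸ hKH))
    have hsolvH : IsSolvable ↥H := by
      refine solvable_of_cyclic_chain (D.subgroupOf H) hnormal ?_ hqc
      haveI := hD.1
      exact isCyclic_of_surjective (Subgroup.subgroupOfEquivOfLe hDH.le).symm
        (Subgroup.subgroupOfEquivOfLe hDH.le).symm.surjective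
    exact ⟨solv_of_normal H hHNormal hsolvH (solvable_of_cyclic hGHcyc), hCpart⟩
  · -- CASE II
    push_neg at hcase
    have hcase2 : ∀ D : Subgroup G, IsMaximalCyclic D → ¬IsCoatom D →
        ¬(∀ h ∈ H, cj h D = D) := by
      intro D h1 h2 h3
      obtain ⟨h0, hh0, hne⟩ := hcase D h1 h2
      exact hne (h3 h0 hh0)
    have hnormD : ∀ D : Subgroup G, IsMaximalCyclic D → ¬IsCoatom D →
        Subgroup.normalizer (D : Set G) = D := by
      intro D h1 h2
      rcases hinterval D h1 h2 (Subgroup.normalizer (D : Set G)) Subgroup.le_normalizer with h | h | h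
      · exact h
      · exfalso
        exact hcase2 D h1 h2 (fun g hg => cj_eq_iff_mem_normalizer.mpr (h ▸ hg))
      · exfalso
        refine hcase2 D h1 h2 (fun g _ => cj_eq_iff_mem_normalizer.mpr ?_)
        rw [h]; exact Subgroup.mem_top g
    by_cases hpair : ∃ a b : G, cj a D0 ≠ cj b D0 ∧ cj a D0 ⊓ cj b D0 ≠ ⊥
    · -- a nontrivial intersection of two conjugates exists
      obtain ⟨a, b, habne, hWne⟩ := hpair
      set E1 := cj a D0 with hE1def
      set E2 := cj b D0 with hE2def
      obtain ⟨hE1m, hE1nc⟩ := hstab a D0 hD0 hD0nc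
      obtain ⟨hE2m, hE2nc⟩ := hstab b D0 hD0 hD0nc
      have hE1H : E1 < H := hHmax _ hE1m hE1nc
      have hE2H : E2 < H := hHmax _ hE2m hE2nc
      have hsupH : E1 ⊔ E2 = H := by
        rcases hinterval E1 hE1m hE1nc (E1 ⊔ E2) le_sup_left with h | h | h
        · exfalso
          have h21 : E2 ≤ E1 := le_sup_right.trans h.le
          exact habne (hE2m.2 E1 hE1m.1 h21)
        · exact h
        · exfalso
          exact hHtop (top_le_iff.mp (h ▸ sup_le hE1H.le hE2H.le))
      obtain ⟨w, hwW, hw1⟩ : ∃ w ∈ E1 ⊓ E2, w ≠ 1 := by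
        by_contra hcontr
        push_neg at hcontr
        refine hWne (le_antisymm ?_ bot_le)
        intro x hx
        rw [Subgroup.mem_bot]
        exact hcontr x hx
      obtain ⟨hwE1, hwE2⟩ := Subgroup.mem_inf.mp hwW
      have hwH : w ∈ H := hE1H.le hwE1
      have hcomm : ∀ x ∈ H, w * x = x * w := by
        have hcent : H ≤ Subgroup.centralizer {w} := by
          rw [← hsupH]
          refine sup_le ?_ ?_
          · intro e he
            rw [Subgroup.mem_centralizer_iff]
            intro z hz
            rw [Set.mem_singleton_iff] at hz
            subst hz
            exact comm_of_cyclic_subgroup hE1m.1 hwE1 he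
          · intro e he
            rw [Subgroup.mem_centralizer_iff]
            intro z hz
            rw [Set.mem_singleton_iff] at hz
            subst hz
            exact comm_of_cyclic_subgroup hE2m.1 hwE2 he
        intro x hx
        have := hcent hx
        rw [Subgroup.mem_centralizer_iff] at this
        exact this w rfl
      -- step alpha : w lies in every non-coatom maximal cyclic subgroup
      have hwall : ∀ D : Subgroup G, IsMaximalCyclic D → ¬IsCoatom D → w ∈ D := by
        intro D h1 h2
        have hDH' : D < H := hHmax D h1 h2
        have hJle : D ⊔ zpowers w ≤ H := sup_le hDH'.le (zpowers_le.mpr hwH)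
        rcases hinterval D h1 h2 (D ⊔ zpowers w) le_sup_left with h | h | h
        · have : w ∈ D ⊔ zpowers w :=
            (le_sup_right : zpowers w ≤ D ⊔ zpowers w) (mem_zpowers w)
          rwa [h] at this
        · exfalso
          have hwn : w ∈ Subgroup.normalizer (D : Set G) :=
            mem_normalizer_of_comm (fun x hx => hcomm x (hDH'.le hx))
          have hsub : D ⊔ zpowers w ≤ Subgroup.normalizer (D : Set G) :=
            sup_le Subgroup.le_normalizer (zpowers_le.mpr hwn)
          rw [h] at hsub
          exact hcase2 D h1 h2 (fun g hg => cj_eq_iff_mem_normalizer.mpr (hsub hg))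
        · exfalso
          exact hHtop (top_le_iff.mp (h ▸ hJle))
      -- the intersection of all non-coatom maximal cyclics
      set Z0 : Subgroup G := sInf {D : Subgroup G | IsMaximalCyclic D ∧ ¬IsCoatom D} with hZ0def
      have hwZ0 : w ∈ Z0 := Subgroup.mem_sInf.mpr (fun D hD => hwall D hD.1 hD.2)
      have hZ0D0 : Z0 ≤ D0 := sInf_le ⟨hD0, hD0nc⟩
      have hZ0cyc : IsCyclic ↥Z0 := by
        haveI := hD0.1
        exact Subgroup.isCyclic_of_le hZ0D0
      have hZ0normal : Z0.Normal := by
        constructor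
        intro z hz g
        refine Subgroup.mem_sInf.mpr (fun D hD => ?_)
        obtain ⟨hD1', hD2'⟩ := hstab g⁻¹ D hD.1 hD.2
        have hzD : z ∈ cj g⁻¹ D := Subgroup.mem_sInf.mp hz _ ⟨hD1', hD2'⟩
        rw [mem_cj] at hzD
        simpa using hzD
      have hY : sSup {D : Subgroup G | IsMaximalCyclic D ∧ ¬IsCoatom D} = H := by
        have h1 : D0 ≤ sSup {D : Subgroup G | IsMaximalCyclic D ∧ ¬IsCoatom D} :=
          le_sSup ⟨hD0, hD0nc⟩
        have h2 : sSup {D : Subgroup G | IsMaximalCyclic D ∧ ¬IsCoatom D} ≤ H :=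
          sSup_le (fun D hD => (hHmax D hD.1 hD.2).le)
        rcases hinterval D0 hD0 hD0nc _ h1 with h | h | h
        · exfalso
          refine hcase2 D0 hD0 hD0nc (fun g _ => ?_)
          obtain ⟨hP1, hP2⟩ := hstab g D0 hD0 hD0nc
          have hle : cj g D0 ≤ D0 := le_of_le_of_eq (le_sSup (show cj g D0 ∈ {D : Subgroup G | IsMaximalCyclic D ∧ ¬IsCoatom D} from ⟨hP1, hP2⟩)) h
          exact (hP1.2 D0 hD0.1 hle).symm
        · exact h
        · exfalso
          exact hHtop (top_le_iff.mp (h ▸ h2))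
      have hZ0cent : H ≤ Subgroup.centralizer (Z0 : Set G) := by
        rw [← hY]
        refine sSup_le (fun D hD => ?_)
        intro d hd
        rw [Subgroup.mem_centralizer_iff]
        intro z hz
        exact comm_of_cyclic_subgroup hD.1.1 (Subgroup.mem_sInf.mp hz D hD) hd
      by_cases hZC : ∀ C' : Subgroup G, IsMaximalCyclic C' → IsCoatom C' → Z0 ≤ C'
      · -- Z0 is contained in every maximal cyclic coatom: Z0 is central, quotient induction
        have hcentral : ∀ z ∈ Z0, ∀ g : G, z * g = g * z := by
          have hC'le : C0 ≤ Subgroup.centralizer (Z0 : Set G) := by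
            intro c hc
            rw [Subgroup.mem_centralizer_iff]
            intro z hz
            exact comm_of_cyclic_subgroup hC0m.1 (hZC C0 hC0m hC0c hz) hc
          have hCL : Subgroup.centralizer (Z0 : Set G) = ⊤ := by
            rcases eq_or_lt_of_le hZ0cent with h | h
            · exfalso
              rw [← h] at hC'le
              rcases eq_or_lt_of_le hC'le with h2 | h2
              · exact hHnc (h2 ▸ hC0m.1)
              · exact hHtop (hC0c.2 H h2)
            · exact hHcoatom.2 _ h
          intro z hz g
          have hg : g ∈ Subgroup.centralizer (Z0 : Set G) := by
            rw [hCL]; exact Subgroup.mem_top g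
          rw [Subgroup.mem_centralizer_iff] at hg
          exact hg z hz
        -- quotient by the central subgroup generated by w
        set W0 : Subgroup G := zpowers w with hW0def
        have hW0center : W0 ≤ Subgroup.center G := by
          rw [zpowers_le]
          rw [Subgroup.mem_center_iff]
          intro g
          exact (hcentral w hwZ0 g).symm
        have hW0normal : W0.Normal := by
          constructor
          intro x hx g
          have hxc := hW0center hx
          rw [Subgroup.mem_center_iff] at hxc
          have : g * x * g⁻¹ = x := by rw [hxc g]; group
          rwa [this]
        haveI := hW0normal
        set π := QuotientGroup.mk' W0 with hπdef
        have hπs : Function.Surjective π := QuotientGroup.mk'_surjective W0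
        have hkerπ : π.ker = W0 := QuotientGroup.ker_mk' W0
        have hwD0 : w ∈ D0 := hZ0D0 hwZ0
        have hQnc : ¬IsCyclic (G ⧸ W0) := by
          intro hq
          haveI := hq
          have hGcomm := commutative_of_cyclic_center_quotient π (by
            rw [hkerπ]; exact hW0center)
          refine hcase2 D0 hD0 hD0nc (fun g _ => ?_)
          ext x
          rw [mem_cj]
          have hx : g⁻¹ * x * g = x := by rw [hGcomm g⁻¹ x]; group
          rw [hx]
        set Db := Subgroup.map π D0 with hDbdef
        set Hb := Subgroup.map π H with hHbdef
        have hcomapD : Subgroup.comap π Db = D0 := by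
          rw [hDbdef, Subgroup.comap_map_eq, hkerπ]
          exact sup_eq_left.mpr (zpowers_le.mpr hwD0)
        have hcomapH : Subgroup.comap π Hb = H := by
          rw [hHbdef, Subgroup.comap_map_eq, hkerπ]
          exact sup_eq_left.mpr (zpowers_le.mpr hwH)
        have hDbcyc : IsCyclic ↥Db := by
          obtain ⟨x0, hx0⟩ := exists_zpowers_eq hD0.1
          rw [hDbdef, ← hx0, MonoidHom.map_zpowers]
          exact isCyclic_zpowers _
        have hKcommtool : ∀ K : Subgroup G, (∃ Kb : Subgroup (G ⧸ W0), IsCyclic ↥Kb ∧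
            K = Subgroup.comap π Kb) → ∀ x ∈ K, ∀ yterms ∈ K, x * yterms = yterms * x := by
          intro K hKex x hx y hy
          obtain ⟨Kb, hKbcyc, rfl⟩ := hKex
          set ρ : ↥(Subgroup.comap π Kb) →* (G ⧸ W0) := π.comp (Subgroup.comap π Kb).subtype with hρdef
          have hρrange : ρ.range = Kb := by
            rw [hρdef, MonoidHom.range_comp, Subgroup.range_subtype]
            exact Subgroup.map_comap_eq_self_of_surjective hπs Kb
          haveI : IsCyclic ↥ρ.range := by rw [hρrange]; exact hKbcyc
          have hkerρ : ρ.ker ≤ Subgroup.center ↥(Subgroup.comap π Kb) := by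
            intro k hk
            rw [Subgroup.mem_center_iff]
            intro k'
            have hkW : (↑k : G) ∈ W0 := (QuotientGroup.eq_one_iff (↑k : G)).mp hk
            have h2 := hW0center hkW
            rw [Subgroup.mem_center_iff] at h2
            exact Subtype.ext (h2 ↑k')
          have hcommK := commutative_of_cyclic_center_quotient ρ.rangeRestrict (by
            rw [MonoidHom.ker_rangeRestrict]; exact hkerρ)
          exact congrArg Subtype.val (hcommK ⟨x, hx⟩ ⟨y, hy⟩)
        have hDbmax : IsMaximalCyclic Db := by
          refine ⟨hDbcyc, fun Kb hKb hle => ?_⟩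
          set K := Subgroup.comap π Kb with hKdef
          have hD0K : D0 ≤ K := by
            rw [hKdef, ← hcomapD]
            exact Subgroup.comap_mono hle
          have hKcomm : ∀ x ∈ K, ∀ y ∈ K, x * y = y * x :=
            hKcommtool K ⟨Kb, hKb, rfl⟩
          rcases hinterval D0 hD0 hD0nc K hD0K with h | h | h
          · rw [← Subgroup.map_comap_eq_self_of_surjective hπs Kb, ← hKdef, h, hDbdef]
          · exfalso
            refine hcase2 D0 hD0 hD0nc (fun g hg => ?_)
            have hgK : g ∈ K := by rw [h]; exact hg
            ext x
            rw [mem_cj]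
            constructor
            · intro hx
              have hyK : g⁻¹ * x * g ∈ K := hD0K hx
              have hc : g * (g⁻¹ * x * g) = (g⁻¹ * x * g) * g := hKcomm g hgK _ hyK
              have hgx : g * (g⁻¹ * x * g) = x * g := by group
              have hxe : x = g⁻¹ * x * g := mul_right_cancel (hgx.symm.trans hc)
              rw [hxe]
              exact hx
            · intro hx
              have hxK : x ∈ K := hD0K hx
              have hc : x * g = g * x := hKcomm x hxK g hgK
              have hxe : g⁻¹ * x * g = x := by rw [mul_assoc, hc]; group
              rw [hxe]
              exact hx
          · exfalso
            refine hcase2 D0 hD0 hD0nc (fun g _ => ?_)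
            have hKt : ∀ u : G, u ∈ K := by
              intro u; rw [h]; exact Subgroup.mem_top u
            ext x
            rw [mem_cj]
            have hx : g⁻¹ * x * g = x := by
              rw [hKcomm _ (hKt g⁻¹) _ (hKt x)]
              group
            rw [hx]
        have hDbH : Db < Hb := by
          refine lt_of_le_of_ne (Subgroup.map_mono hD0H.le) ?_
          intro h
          have h2 := congrArg (Subgroup.comap π) h
          rw [hcomapD, hcomapH] at h2
          exact (ne_of_lt hD0H) h2
        have hHbtop : Hb ≠ ⊤ := by
          intro h
          have h2 := congrArg (Subgroup.comap π) h
          rw [hcomapH] at h2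
          rw [Subgroup.comap_top] at h2
          exact hHtop h2
        haveI : Finite (G ⧸ W0) := Quotient.finite _
        have hb2 : beta (G ⧸ W0) = 2 := by
          have hle2 : beta (G ⧸ W0) ≤ 2 := hb ▸ beta_le_of_surjective π hπs
          have hge2 : 2 ≤ beta (G ⧸ W0) := two_le_beta hQnc hDbmax hDbH hHbtop
          omega
        have hcardlt : Nat.card (G ⧸ W0) < n := by
          have hGQ : Nat.card G = Nat.card (G ⧸ W0) * Nat.card ↥W0 :=
            Subgroup.card_eq_card_quotient_mul_card_subgroup W0
          have hW2 : 1 < Nat.card ↥W0 := (Subgroup.one_lt_card_iff_ne_bot W0).mpr (by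
            intro hbot
            exact hw1 (Subgroup.mem_bot.mp (hbot ▸ mem_zpowers w)))
          have hQpos : 0 < Nat.card (G ⧸ W0) := Nat.card_pos
          have h2 : Nat.card (G ⧸ W0) * 2 ≤ Nat.card (G ⧸ W0) * Nat.card ↥W0 :=
            Nat.mul_le_mul_left _ hW2
          omega
        obtain ⟨hsolvQ, -⟩ := IH (Nat.card (G ⧸ W0)) (hcard ▸ hcardlt) (G ⧸ W0) rfl hb2
        exact ⟨solv_of_normal W0 hW0normal (solvable_of_cyclic (isCyclic_zpowers w)) hsolvQ,
          hCpart⟩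
      · -- some maximal cyclic coatom does not contain Z0 : direct solvability
        push_neg at hZC
        obtain ⟨C', hC'm, hC'c, hC'nle⟩ := hZC
        have hsup2 : C' ⊔ Z0 = ⊤ := by
          rcases eq_or_lt_of_le (le_sup_left : C' ≤ C' ⊔ Z0) with h | h
          · exfalso
            exact hC'nle (le_sup_right.trans h.ge)
          · exact hC'c.2 _ h
        haveI := hZ0normal
        have hqc : IsCyclic (G ⧸ Z0) := by
          obtain ⟨x, hx⟩ := exists_zpowers_eq hC'm.1
          set π' := QuotientGroup.mk' Z0 with hπ'def
          refine ⟨π' x, fun q => ?_⟩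
          have hmapZ : Subgroup.map π' Z0 = ⊥ := by
            rw [eq_bot_iff]
            rintro y ⟨z, hz, rfl⟩
            rw [Subgroup.mem_bot]
            exact (QuotientGroup.eq_one_iff z).mpr hz
          have hmaptop : Subgroup.map π' C' = ⊤ := by
            have h1 : Subgroup.map π' (C' ⊔ Z0) = ⊤ := by
              rw [hsup2]
              exact Subgroup.map_top_of_surjective π' (QuotientGroup.mk'_surjective Z0)
            rw [Subgroup.map_sup, hmapZ, sup_bot_eq] at h1
            exact h1
          have : q ∈ Subgroup.map π' (zpowers x) := by
            rw [hx, hmaptop]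
            exact Subgroup.mem_top q
          rwa [MonoidHom.map_zpowers] at this
        exact ⟨solvable_of_cyclic_chain Z0 hZ0normal hZ0cyc hqc, hCpart⟩
    · -- all distinct conjugates of D0 intersect trivially : counting contradiction
      exfalso
      push_neg at hpair
      have hD0norm : Subgroup.normalizer (D0 : Set G) = D0 := hnormD D0 hD0 hD0nc
      haveI := Fintype.ofFinite G
      set nD := Nat.card ↥D0 with hnDdef
      set NH := Nat.card ↥H with hNHdef
      have hn2 : 2 ≤ nD := by
        refine (Subgroup.one_lt_card_iff_ne_bot D0).mpr ?_
        intro hbot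
        apply hnc
        have hsub : ∀ x : G, x = 1 := by
          intro x
          have hzp : zpowers x = D0 :=
            hD0.2 (zpowers x) (isCyclic_zpowers x) (by rw [hbot]; exact bot_le)
          have hmem : x ∈ (⊥ : Subgroup G) := by rw [← hbot, ← hzp]; exact mem_zpowers x
          exact Subgroup.mem_bot.mp hmem
        exact ⟨1, fun x => by rw [hsub x]; exact Subgroup.one_mem (zpowers (1 : G))⟩
      have hNH1 : 1 ≤ NH := by rw [hNHdef]; exact Nat.card_pos
      set Cfin : Finset (Subgroup G) := Finset.image (fun g : G => cj g D0) Finset.univ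
        with hCfindef
      have hCmem : ∀ E ∈ Cfin, ∃ g : G, E = cj g D0 := by
        intro E hE
        obtain ⟨g, -, hg⟩ := Finset.mem_image.mp hE
        exact ⟨g, hg.symm⟩
      set c := Cfin.card with hcdef
      have hfibsub : ∀ g x : G, cj x D0 = cj g D0 → g⁻¹ * x ∈ D0 := by
        intro g x hx'
        have hcjx : cj (g⁻¹ * x) D0 = D0 := by
          rw [← cj_cj, hx', cj_cj, inv_mul_cancel, cj_one]
        rw [← hD0norm]
        exact cj_eq_iff_mem_normalizer.mp hcjx
      have hfib : ∀ E ∈ Cfin, (Finset.univ.filter (fun u : G => cj u D0 = E)).card ≤ nD := by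
        intro E hE
        obtain ⟨g, rfl⟩ := hCmem E hE
        have hcard : (Finset.univ.filter (fun x : G => x ∈ D0)).card = nD := by
          rw [hnDdef, Nat.card_eq_fintype_card, Fintype.card_subtype]
        rw [← hcard]
        refine Finset.card_le_card_of_injOn (fun x => g⁻¹ * x) ?_ ?_
        · intro x hx
          refine Finset.mem_filter.mpr ⟨Finset.mem_univ _, ?_⟩
          exact hfibsub g x (Finset.mem_filter.mp hx).2
        · intro x _ y _ hxy
          exact mul_left_cancel hxy
      have hGle : Fintype.card G ≤ c * nD := by
        have hsub : Finset.univ ⊆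
            Cfin.biUnion (fun E => Finset.univ.filter (fun u : G => cj u D0 = E)) := by
          intro g _
          refine Finset.mem_biUnion.mpr ⟨cj g D0, ?_, ?_⟩
          · exact Finset.mem_image_of_mem _ (Finset.mem_univ g)
          · exact Finset.mem_filter.mpr ⟨Finset.mem_univ _, rfl⟩
        calc Fintype.card G = Finset.univ.card := (Finset.card_univ).symm
          _ ≤ (Cfin.biUnion (fun E => Finset.univ.filter (fun u : G => cj u D0 = E))).card :=
              Finset.card_le_card hsub
          _ ≤ ∑ E ∈ Cfin, (Finset.univ.filter (fun u : G => cj u D0 = E)).card :=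
              Finset.card_biUnion_le
          _ ≤ ∑ _E ∈ Cfin, nD := Finset.sum_le_sum hfib
          _ = c * nD := by rw [Finset.sum_const, smul_eq_mul]
      have hEcard : ∀ E ∈ Cfin,
          ((Finset.univ.filter (fun x : G => x ∈ E)).erase 1).card = nD - 1 := by
        intro E hE
        obtain ⟨g, rfl⟩ := hCmem E hE
        rw [Finset.card_erase_of_mem
          (Finset.mem_filter.mpr ⟨Finset.mem_univ _, one_mem _⟩)]
        have h1 : (Finset.univ.filter (fun x : G => x ∈ cj g D0)).card
            = Nat.card ↥(cj g D0) := by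
          rw [Nat.card_eq_fintype_card, Fintype.card_subtype]
        rw [h1, card_cj, hnDdef]
      have hdisj : ∀ E ∈ Cfin, ∀ E' ∈ Cfin, E ≠ E' →
          Disjoint ((Finset.univ.filter (fun x : G => x ∈ E)).erase 1)
                   ((Finset.univ.filter (fun x : G => x ∈ E')).erase 1) := by
        intro E hE E' hE' hne
        obtain ⟨g, rfl⟩ := hCmem E hE
        obtain ⟨g', rfl⟩ := hCmem E' hE'
        have hbot := hpair g g' hne
        rw [Finset.disjoint_left]
        intro x hx hx'
        have h1 := Finset.mem_erase.mp hx
        have h2 := Finset.mem_erase.mp hx'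
        have hxin : x ∈ cj g D0 ⊓ cj g' D0 :=
          Subgroup.mem_inf.mpr ⟨(Finset.mem_filter.mp h1.2).2, (Finset.mem_filter.mp h2.2).2⟩
        rw [hbot] at hxin
        exact h1.1 (Subgroup.mem_bot.mp hxin)
      have hUcard : (Cfin.biUnion
          (fun E => (Finset.univ.filter (fun x : G => x ∈ E)).erase 1)).card
          = c * (nD - 1) := by
        rw [Finset.card_biUnion hdisj, Finset.sum_congr rfl hEcard, Finset.sum_const,
          smul_eq_mul]
      have hUsub : (Cfin.biUnion
          (fun E => (Finset.univ.filter (fun x : G => x ∈ E)).erase 1))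
          ⊆ (Finset.univ.filter (fun x : G => x ∈ H)).erase 1 := by
        intro x hx
        obtain ⟨E, hE, hxE⟩ := Finset.mem_biUnion.mp hx
        obtain ⟨g, rfl⟩ := hCmem E hE
        have h1 := Finset.mem_erase.mp hxE
        obtain ⟨hEm, hEnc⟩ := hstab g D0 hD0 hD0nc
        refine Finset.mem_erase.mpr ⟨h1.1, Finset.mem_filter.mpr ⟨Finset.mem_univ _, ?_⟩⟩
        exact (hHmax _ hEm hEnc).le (Finset.mem_filter.mp h1.2).2
      have hHcardf : ((Finset.univ.filter (fun x : G => x ∈ H)).erase 1).card = NH - 1 := by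
        rw [Finset.card_erase_of_mem
          (Finset.mem_filter.mpr ⟨Finset.mem_univ _, one_mem _⟩)]
        rw [hNHdef, Nat.card_eq_fintype_card, Fintype.card_subtype]
      have hBle : c * (nD - 1) ≤ NH - 1 := by
        rw [← hUcard, ← hHcardf]
        exact Finset.card_le_card hUsub
      set z := H.index * NH with hzdef
      have hidxcard : z = Nat.card G := by rw [hzdef, hNHdef]; exact Subgroup.index_mul_card H
      have hidx2 : 2 ≤ H.index := by
        have h0 : H.index ≠ 0 := Subgroup.index_ne_zero_of_finite
        have h1 : H.index ≠ 1 := fun hone => hHtop (Subgroup.index_eq_one.mp hone)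
        omega
      have e2 : 2 * NH ≤ z := by rw [hzdef]; exact Nat.mul_le_mul hidx2 (le_refl NH)
      have e1 : c * nD = c * (nD - 1) + c := by
        have hnd1 : nD - 1 + 1 = nD := by omega
        calc c * nD = c * ((nD - 1) + 1) := by rw [hnd1]
          _ = c * (nD - 1) + c := by ring
      have e3 : c ≤ c * (nD - 1) := by
        calc c = c * 1 := (mul_one c).symm
          _ ≤ c * (nD - 1) := Nat.mul_le_mul (le_refl c) (by omega)
      rw [e1] at hGle
      have hNG : Nat.card G = Fintype.card G := Nat.card_eq_fintype_card
      set y := c * (nD - 1)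
      omega

end Beta2

theorem stmt19 {G : Type*} [Group G] [Finite G] (h : beta G = 2) :
    IsSolvable G ∧ ∃ C : Subgroup G, IsCyclic ↥C ∧ IsCoatom C :=
  Beta2.main (Nat.card G) G rfl h
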